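/- arXiv:1606.02863 — 2 statements merged into one kernel-verified Lean document; each statement's English description precedes it below -/
import Mathlib

section
/- Energy of the stationary solutions: Let p > 1. For every d ∈ (−1,1) and θ ∈ ℝ, E(e^{iθ} κ(d,·), 0) = E(κ₀, 0), where κ₀ denotes the constant function with value κ₀; moreover E(κ₀, 0) > 0. Explicitly: ∫_{−1}^{1} ( ½ |∂_y κ(d,y)|² (1−y²) + ((p+1)/(p−1)²) κ(d,y)² − (1/(p+1)) κ(d,y)^{p+1} ) ρ(y) dy = ∫_{−1}^{1} ( ((p+1)/(p−1)²) κ₀² − (1/(p+1)) κ₀^{p+1} ) ρ(y) dy, and this common value is strictly positive. -/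
open Real MeasureTheory Set

noncomputable section

/-- κ₀ = (2(p+1)/(p−1)²)^{1/(p−1)} -/
def kappa0 (p : ℝ) : ℝ := (2 * (p + 1) / (p - 1) ^ 2) ^ (1 / (p - 1))

/-- κ(d,y) = κ₀ (1−d²)^{1/(p−1)} (1+dy)^{−2/(p−1)} -/
def kappaD (p d y : ℝ) : ℝ :=
  kappa0 p * (1 - d ^ 2) ^ (1 / (p - 1)) * (1 + d * y) ^ (-(2 / (p - 1)))

/-- ρ(y) = (1−y²)^{2/(p−1)} -/
def rho (p y : ℝ) : ℝ := (1 - y ^ 2) ^ (2 / (p - 1))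

/-- u is a C² solution of ∂²ₜu = ∂²ₓu + |u|^{p−1}u on D (first variable space, second time). -/
def IsWaveSolution (p : ℝ) (D : Set (ℝ × ℝ)) (u : ℝ → ℝ → ℂ) : Prop :=
  ContDiffOn ℝ 2 (fun q : ℝ × ℝ => u q.1 q.2) D ∧
  ∀ q ∈ D,
    deriv (deriv (fun t => u q.1 t)) q.2 =
      deriv (deriv (fun x => u x q.2)) q.1 +
        ((‖u q.1 q.2‖ ^ (p - 1) : ℝ) : ℂ) * u q.1 q.2

/-- w is a C² solution of the self-similar equation (★) on D (first variable y, second s). -/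
def IsStarSolution (p : ℝ) (D : Set (ℝ × ℝ)) (w : ℝ → ℝ → ℂ) : Prop :=
  ContDiffOn ℝ 2 (fun q : ℝ × ℝ => w q.1 q.2) D ∧
  ∀ q ∈ D,
    deriv (deriv (fun s => w q.1 s)) q.2 =
      (((rho p q.1)⁻¹ : ℝ) : ℂ) *
          deriv (fun y => ((rho p y * (1 - y ^ 2) : ℝ) : ℂ) * deriv (fun z => w z q.2) y) q.1
        - ((2 * (p + 1) / (p - 1) ^ 2 : ℝ) : ℂ) * w q.1 q.2
        + ((‖w q.1 q.2‖ ^ (p - 1) : ℝ) : ℂ) * w q.1 q.2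
        - (((p + 3) / (p - 1) : ℝ) : ℂ) * deriv (fun s => w q.1 s) q.2
        - 2 * (q.1 : ℂ) * deriv (fun y => deriv (fun s => w y s) q.2) q.1

/-- L² norm on the interval (a,b). -/
def L2norm (a b : ℝ) (f : ℝ → ℂ) : ℝ :=
  Real.sqrt (∫ x in Ioo a b, ‖f x‖ ^ 2)

/-- H¹ norm on the interval (a,b). -/
def H1norm (a b : ℝ) (f : ℝ → ℂ) : ℝ :=
  Real.sqrt (∫ x in Ioo a b, (‖f x‖ ^ 2 + ‖deriv f x‖ ^ 2))

/-- The weighted norm of the energy space H. -/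
def Hnorm (p : ℝ) (q1 q2 : ℝ → ℂ) : ℝ :=
  Real.sqrt (∫ y in Ioo (-1 : ℝ) 1,
    (‖q1 y‖ ^ 2 + ‖deriv q1 y‖ ^ 2 * (1 - y ^ 2) +
      ‖q2 y‖ ^ 2) * rho p y)

/-- The Lyapunov functional E. -/
def energy (p : ℝ) (w v : ℝ → ℂ) : ℝ :=
  ∫ y in Ioo (-1 : ℝ) 1,
    ((1 / 2) * ‖v y‖ ^ 2 + (1 / 2) * ‖deriv w y‖ ^ 2 * (1 - y ^ 2) +
      ((p + 1) / (p - 1) ^ 2) * ‖w y‖ ^ 2 -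
      (1 / (p + 1)) * ‖w y‖ ^ (p + 1)) * rho p y

/-- Self-similar variables around (x, T x). -/
def wSelf (p : ℝ) (u : ℝ → ℝ → ℂ) (T : ℝ → ℝ) (x y s : ℝ) : ℂ :=
  ((Real.exp (-s)) ^ (2 / (p - 1)) : ℝ) * u (x + y * Real.exp (-s)) (T x - Real.exp (-s))

/-- x₀ is a non-characteristic point for the blow-up curve T. -/
def NonChar (T : ℝ → ℝ) (x0 : ℝ) : Prop :=
  ∃ δ0 ∈ Ioo (0 : ℝ) 1, ∃ t0 < T x0, ∀ ξ τ : ℝ,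
    (ξ, τ) ≠ (x0, T x0) → t0 ≤ τ → τ ≤ T x0 - δ0 * |ξ - x0| → τ < T ξ

/-- Blow-up setup: u solves the wave equation on D_u = {t < T x} and admits no extension. -/
def BlowupSetup (p : ℝ) (T : ℝ → ℝ) (u : ℝ → ℝ → ℂ) : Prop :=
  LipschitzWith 1 T ∧
  IsWaveSolution p {q : ℝ × ℝ | q.2 < T q.1} u ∧
  ¬ ∃ (T' : ℝ → ℝ) (u' : ℝ → ℝ → ℂ),
      (∀ x, T x ≤ T' x) ∧ T' ≠ T ∧
      IsWaveSolution p {q : ℝ × ℝ | q.2 < T' q.1} u' ∧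
      ∀ q : ℝ × ℝ, q.2 < T q.1 → u' q.1 q.2 = u q.1 q.2

/-- Hypothesis (P): exponential convergence to the profile at every non-characteristic point. -/
def HypP (p : ℝ) (T : ℝ → ℝ) (u : ℝ → ℝ → ℂ) (C0 μ0 : ℝ) (d θ sf : ℝ → ℝ) : Prop :=
  0 < C0 ∧ 0 < μ0 ∧
  ∀ x, NonChar T x →
    d x ∈ Ioo (-1 : ℝ) 1 ∧
    ∀ s ≥ sf x,
      Hnorm p
        (fun y => wSelf p u T x y s -
          Complex.exp (Complex.I * (θ x : ℂ)) * ((kappaD p (d x) y : ℝ) : ℂ))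
        (fun y => deriv (fun z => wSelf p u T x y z) s)
      ≤ C0 * Real.exp (-μ0 * (s - sf x))


/-! ### Auxiliary material for STATEMENT 12 -/

namespace EnergyStationary

variable {p d y : ℝ}

lemma base_pos (hp : 1 < p) : (0:ℝ) < 2 * (p + 1) / (p - 1) ^ 2 := by
  have h1 : (0:ℝ) < p - 1 := by linarith
  have h2 : (0:ℝ) < p + 1 := by linarith
  positivity

lemma kappa0_pos (hp : 1 < p) : 0 < kappa0 p :=
  Real.rpow_pos_of_pos (base_pos hp) _

lemma kappa0_rpow_sub (hp : 1 < p) : kappa0 p ^ (p - 1) = 2 * (p + 1) / (p - 1) ^ 2 := by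
  rw [kappa0, ← Real.rpow_mul (base_pos hp).le, one_div,
    inv_mul_cancel₀ (by linarith : p - 1 ≠ 0), Real.rpow_one]

lemma kappa0_rpow_succ (hp : 1 < p) :
    kappa0 p ^ (p + 1) = kappa0 p ^ 2 * (2 * (p + 1) / (p - 1) ^ 2) := by
  have h0 := kappa0_pos hp
  conv_lhs => rw [show p + 1 = (2:ℝ) + (p - 1) by ring]
  rw [Real.rpow_add h0, kappa0_rpow_sub hp, Real.rpow_two]

lemma V_pos' (hd : d ∈ Ioo (-1:ℝ) 1) (hy : y ∈ Icc (-1:ℝ) 1) : 0 < 1 + d * y := by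
  obtain ⟨hd1, hd2⟩ := hd; obtain ⟨hy1, hy2⟩ := hy
  rcases le_or_gt y 0 with h | h
  · nlinarith [mul_nonneg (by linarith : (0:ℝ) ≤ 1 + d) (by linarith : (0:ℝ) ≤ 1 + y)]
  · nlinarith [mul_nonneg (by linarith : (0:ℝ) ≤ 1 - d) (by linarith : (0:ℝ) ≤ 1 - y)]

lemma itos (f : ℝ → ℝ) : ∫ y in (-1:ℝ)..1, f y = ∫ y in Ioo (-1:ℝ) 1, f y := by
  rw [intervalIntegral.integral_of_le (by norm_num), MeasureTheory.integral_Ioc_eq_integral_Ioo]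

lemma integral_rho_pos (hp : 1 < p) : 0 < ∫ y in Ioo (-1:ℝ) 1, rho p y := by
  rw [← itos]
  have hq : (0:ℝ) < p - 1 := by linarith
  apply intervalIntegral.intervalIntegral_pos_of_pos_on
  · exact ((by fun_prop : Continuous fun y : ℝ => 1 - y ^ 2).rpow_const
      (fun x => Or.inr (by positivity))).intervalIntegrable _ _
  · intro x hx
    have h1 : 0 < 1 - x ^ 2 := by obtain ⟨h1, h2⟩ := hx; nlinarith
    exact Real.rpow_pos_of_pos h1 _
  · norm_num

/-- The auxiliary function whose derivative generates the exact-derivative part. -/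
def Hfun (p d y : ℝ) : ℝ :=
  (1 - d ^ 2) ^ (2 / (p - 1)) *
    ((1 - y ^ 2) ^ (2 / (p - 1) + 1) * (1 + d * y) ^ (-(4 / (p - 1)) - 1))

def Hder (p d y : ℝ) : ℝ :=
  (1 - d ^ 2) ^ (2 / (p - 1)) *
    ((-(2 * y) * (2 / (p - 1) + 1) * (1 - y ^ 2) ^ (2 / (p - 1))) * (1 + d * y) ^ (-(4 / (p - 1)) - 1)
      + (1 - y ^ 2) ^ (2 / (p - 1) + 1) * (d * (-(4 / (p - 1)) - 1) * (1 + d * y) ^ (-(4 / (p - 1)) - 2)))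

lemma hasDerivAt_Hfun (hp : 1 < p) (hd : d ∈ Ioo (-1:ℝ) 1) (hy : y ∈ Icc (-1:ℝ) 1) :
    HasDerivAt (fun y => Hfun p d y) (Hder p d y) y := by
  have hq : (0:ℝ) < p - 1 := by linarith
  have hV := V_pos' hd hy
  have hin1 : HasDerivAt (fun y : ℝ => 1 - y ^ 2) (-(2 * y)) y := by
    simpa using ((hasDerivAt_pow 2 y).const_sub 1)
  have hin2 : HasDerivAt (fun y : ℝ => 1 + d * y) d y := by
    simpa using ((hasDerivAt_id y).const_mul d).const_add 1
  have h1 : HasDerivAt (fun y : ℝ => (1 - y ^ 2) ^ (2 / (p - 1) + 1))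
      (-(2 * y) * (2 / (p - 1) + 1) * (1 - y ^ 2) ^ (2 / (p - 1))) y := by
    have hone : (1:ℝ) ≤ 2 / (p - 1) + 1 := by
      have : (0:ℝ) < 2 / (p - 1) := by positivity
      linarith
    have := hin1.rpow_const (p := 2 / (p - 1) + 1) (Or.inr hone)
    rwa [show 2 / (p - 1) + 1 - 1 = 2 / (p - 1) by ring] at this
  have h2 : HasDerivAt (fun y : ℝ => (1 + d * y) ^ (-(4 / (p - 1)) - 1))
      (d * (-(4 / (p - 1)) - 1) * (1 + d * y) ^ (-(4 / (p - 1)) - 2)) y := by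
    have := hin2.rpow_const (p := -(4 / (p - 1)) - 1) (Or.inl hV.ne')
    rwa [show -(4 / (p - 1)) - 1 - 1 = -(4 / (p - 1)) - 2 by ring] at this
  exact (h1.mul h2).const_mul _

lemma Hder_continuousOn (hp : 1 < p) (hd : d ∈ Ioo (-1:ℝ) 1) :
    ContinuousOn (fun y => Hder p d y) (Icc (-1:ℝ) 1) := by
  have hq : (0:ℝ) < p - 1 := by linarith
  intro x hx
  have hV := V_pos' hd hx
  apply ContinuousAt.continuousWithinAt
  unfold Hder
  have c1 : ContinuousAt (fun y : ℝ => (1 - y ^ 2) ^ (2 / (p - 1))) x :=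
    ContinuousAt.rpow_const (by fun_prop) (Or.inr (by positivity))
  have c1' : ContinuousAt (fun y : ℝ => (1 - y ^ 2) ^ (2 / (p - 1) + 1)) x :=
    ContinuousAt.rpow_const (by fun_prop) (Or.inr (by positivity))
  have c2 : ContinuousAt (fun y : ℝ => (1 + d * y) ^ (-(4 / (p - 1)) - 1)) x :=
    ContinuousAt.rpow_const (by fun_prop) (Or.inl hV.ne')
  have c3 : ContinuousAt (fun y : ℝ => (1 + d * y) ^ (-(4 / (p - 1)) - 2)) x :=
    ContinuousAt.rpow_const (by fun_prop) (Or.inl hV.ne')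
  fun_prop

lemma integral_Hder_eq_zero (hp : 1 < p) (hd : d ∈ Ioo (-1:ℝ) 1) :
    ∫ y in Ioo (-1:ℝ) 1, Hder p d y = 0 := by
  have hq : (0:ℝ) < p - 1 := by linarith
  have key : ∫ y in (-1:ℝ)..1, Hder p d y = Hfun p d 1 - Hfun p d (-1) := by
    apply intervalIntegral.integral_eq_sub_of_hasDerivAt
    · intro x hx
      rw [uIcc_of_le (by norm_num)] at hx
      exact hasDerivAt_Hfun hp hd hx
    · have hcont : ContinuousOn (fun y => Hder p d y) (uIcc (-1:ℝ) 1) := by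
        rw [uIcc_of_le (by norm_num)]; exact Hder_continuousOn hp hd
      exact hcont.intervalIntegrable
  have h1 : Hfun p d 1 = 0 := by
    simp [Hfun, Real.zero_rpow (by positivity : 2 / (p-1) + 1 ≠ 0)]
  have h2 : Hfun p d (-1) = 0 := by
    simp [Hfun, Real.zero_rpow (by positivity : 2 / (p-1) + 1 ≠ 0)]
  rw [intervalIntegral.integral_of_le (by norm_num),
    MeasureTheory.integral_Ioc_eq_integral_Ioo] at key
  rw [key, h1, h2, sub_zero]

lemma cov (hp : 1 < p) (hd : d ∈ Ioo (-1:ℝ) 1) :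
    ∫ y in Ioo (-1:ℝ) 1,
        (1 - d ^ 2) ^ (2 / (p - 1) + 1) * (1 - y ^ 2) ^ (2 / (p - 1)) *
          (1 + d * y) ^ (-(4 / (p - 1)) - 2)
      = ∫ z in Ioo (-1:ℝ) 1, (1 - z ^ 2) ^ (2 / (p - 1)) := by
  have hq : (0:ℝ) < p - 1 := by linarith
  have hE : (0:ℝ) < 1 - d ^ 2 := by obtain ⟨h1, h2⟩ := hd; nlinarith
  set φ : ℝ → ℝ := fun y => (y + d) / (1 + d * y) with hφ
  set φ' : ℝ → ℝ := fun y => (1 - d ^ 2) / (1 + d * y) ^ 2 with hφ'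
  set g : ℝ → ℝ := fun z => (1 - z ^ 2) ^ (2 / (p - 1)) with hg
  have hgc : Continuous g := by
    rw [continuous_iff_continuousAt]
    intro x
    exact ContinuousAt.rpow_const (by fun_prop) (Or.inr (by positivity))
  have hderiv : ∀ x ∈ uIcc (-1:ℝ) 1, HasDerivAt φ (φ' x) x := by
    intro x hx
    rw [uIcc_of_le (by norm_num)] at hx
    have hV := V_pos' hd hx
    have h1' : HasDerivAt (fun y : ℝ => y + d) 1 x := (hasDerivAt_id x).add_const d
    have h2 : HasDerivAt (fun y : ℝ => 1 + d * y) d x := by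
      simpa using ((hasDerivAt_id x).const_mul d).const_add 1
    have := h1'.div h2 hV.ne'
    have heq : (1 * (1 + d * x) - (x + d) * d) / (1 + d * x) ^ 2
        = (1 - d ^ 2) / (1 + d * x) ^ 2 := by ring
    rw [heq] at this
    exact this
  have hφ'c : ContinuousOn φ' (uIcc (-1:ℝ) 1) := by
    rw [uIcc_of_le (by norm_num)]
    intro x hx
    have hV := V_pos' hd hx
    exact (ContinuousAt.div (by fun_prop) (by fun_prop) (by positivity)).continuousWithinAt
  have hmain := intervalIntegral.integral_comp_smul_deriv hderiv hφ'c hgc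
  have hφa : φ (-1) = -1 := by
    have : (1:ℝ) - d ≠ 0 := by obtain ⟨h1, h2⟩ := hd; intro h; nlinarith
    show ((-1:ℝ) + d) / (1 + d * (-1)) = -1
    rw [div_eq_iff (by intro h; apply this; linarith : (1 + d * (-1)) ≠ 0)]
    try ring
  have hφb : φ 1 = 1 := by
    have : (1:ℝ) + d ≠ 0 := by obtain ⟨h1, h2⟩ := hd; intro h; nlinarith
    show ((1:ℝ) + d) / (1 + d * 1) = 1
    rw [div_eq_iff (by intro h; apply this; linarith : (1 + d * 1) ≠ 0)]
    try ring
  rw [hφa, hφb] at hmain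
  have heqon : EqOn (fun y => φ' y • (g ∘ φ) y)
      (fun y => (1 - d ^ 2) ^ (2 / (p - 1) + 1) * (1 - y ^ 2) ^ (2 / (p - 1)) *
          (1 + d * y) ^ (-(4 / (p - 1)) - 2)) (uIcc (-1:ℝ) 1) := by
    rw [uIcc_of_le (by norm_num)]
    intro x hx
    have hV := V_pos' hd hx
    have hU : (0:ℝ) ≤ 1 - x ^ 2 := by obtain ⟨h1, h2⟩ := hx; nlinarith
    simp only [hφ, hφ', hg, Function.comp, smul_eq_mul]
    have harg : 1 - ((x + d) / (1 + d * x)) ^ 2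
        = ((1 - d ^ 2) * (1 - x ^ 2)) / (1 + d * x) ^ 2 := by
      rw [div_pow, one_sub_div (pow_ne_zero 2 hV.ne')]
      ring
    rw [harg, Real.div_rpow (by positivity) (by positivity),
      Real.mul_rpow hE.le hU,
      show ((1 + d * x) ^ 2) ^ (2 / (p - 1)) = (1 + d * x) ^ (2 * (2 / (p - 1))) by
        rw [Real.rpow_mul hV.le, Real.rpow_two],
      Real.rpow_add_one hE.ne' (2 / (p - 1)),
      show (-(4 / (p - 1)) - 2 : ℝ) = -(2 * (2 / (p - 1))) + (-2) by ring,
      Real.rpow_add hV, Real.rpow_neg hV.le (2 * (2 / (p-1)))]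
    rw [show ((1 + d * x) ^ ((-2 : ℝ))) = ((1 + d * x) ^ 2)⁻¹ by
      rw [← Real.rpow_two, ← Real.rpow_neg hV.le]; try norm_num]
    field_simp
    try ring
  rw [intervalIntegral.integral_congr heqon] at hmain
  simp only [intervalIntegral.integral_of_le (show (-1:ℝ) ≤ 1 by norm_num),
    MeasureTheory.integral_Ioc_eq_integral_Ioo] at hmain
  exact hmain

def kdDeriv (p d y : ℝ) : ℝ :=
  kappa0 p * (1 - d ^ 2) ^ (1 / (p - 1)) *
    (d * (-(2 / (p - 1))) * (1 + d * y) ^ (-(2 / (p - 1)) - 1))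

lemma hasDerivAt_kappaD (hV : 0 < 1 + d * y) :
    HasDerivAt (fun y => kappaD p d y) (kdDeriv p d y) y := by
  have hin : HasDerivAt (fun y : ℝ => 1 + d * y) d y := by
    simpa using ((hasDerivAt_id y).const_mul d).const_add 1
  have h := hin.rpow_const (p := -(2 / (p - 1))) (Or.inl hV.ne')
  exact h.const_mul _

lemma key_identity (hp : 1 < p) (hd : d ∈ Ioo (-1:ℝ) 1) (hy : y ∈ Ioo (-1:ℝ) 1) :
    (1/2) * (kdDeriv p d y)^2 * (1 - y^2) * rho p y
      + ((p+1)/(p-1)^2) * (kappaD p d y)^2 * rho p y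
      - (1/(p+1)) * (kappaD p d y) ^ (p+1) * rho p y
    = (kappa0 p ^ 2 / (p-1)) *
        ((1-d^2)^(2/(p-1)+1) * (1-y^2)^(2/(p-1)) * (1+d*y)^(-(4/(p-1))-2))
      + (-(d * kappa0 p ^ 2 / (p-1))) * Hder p d y := by
  have hq : (0:ℝ) < p - 1 := by linarith
  have hq1 : (0:ℝ) < p + 1 := by linarith
  obtain ⟨hd1, hd2⟩ := hd
  obtain ⟨hy1, hy2⟩ := hy
  have hU : (0:ℝ) < 1 - y ^ 2 := by nlinarith
  have hV : (0:ℝ) < 1 + d * y := by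
    rcases le_or_gt y 0 with h | h
    · nlinarith [mul_nonneg (by linarith : (0:ℝ) ≤ 1 + d) (by linarith : (0:ℝ) ≤ 1 + y)]
    · nlinarith [mul_nonneg (by linarith : (0:ℝ) ≤ 1 - d) (by linarith : (0:ℝ) ≤ 1 - y)]
  have hE : (0:ℝ) < 1 - d ^ 2 := by nlinarith
  have hk := kappa0_pos hp
  have he1 : (0:ℝ) < (1 - d ^ 2) ^ (1 / (p - 1)) := Real.rpow_pos_of_pos hE _
  have hC2 : (0:ℝ) < (1 + d * y) ^ (2 / (p - 1)) := Real.rpow_pos_of_pos hV _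
  have hVn : (1 + d * y) ^ (-(2 / (p - 1))) = ((1 + d * y) ^ (2 / (p - 1)))⁻¹ :=
    Real.rpow_neg hV.le _
  have hVm : (1 + d * y) ^ (-(2 / (p - 1)) - 1)
      = ((1 + d * y) ^ (2 / (p - 1)))⁻¹ * (1 + d * y)⁻¹ := by
    rw [show -(2 / (p - 1)) - 1 = -(2 / (p - 1)) + (-1) by ring, Real.rpow_add hV,
      Real.rpow_neg hV.le, Real.rpow_neg hV.le, Real.rpow_one]
  have hV42 : (1 + d * y) ^ (-(4 / (p - 1)) - 2)
      = ((1 + d * y) ^ (2 / (p - 1)) * (1 + d * y) ^ (2 / (p - 1)) * (1 + d * y) ^ 2)⁻¹ := by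
    rw [show -(4 / (p - 1)) - 2 = -(2 / (p - 1) + (2 / (p - 1) + 2)) by ring,
      Real.rpow_neg hV.le, Real.rpow_add hV, Real.rpow_add hV, Real.rpow_two]
    ring
  have hV41 : (1 + d * y) ^ (-(4 / (p - 1)) - 1)
      = ((1 + d * y) ^ (2 / (p - 1)) * (1 + d * y) ^ (2 / (p - 1)) * (1 + d * y))⁻¹ := by
    rw [show -(4 / (p - 1)) - 1 = -(2 / (p - 1) + (2 / (p - 1) + 1)) by ring,
      Real.rpow_neg hV.le, Real.rpow_add hV, Real.rpow_add hV, Real.rpow_one]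
    ring
  have hE2 : (1 - d ^ 2) ^ (2 / (p - 1))
      = (1 - d ^ 2) ^ (1 / (p - 1)) * (1 - d ^ 2) ^ (1 / (p - 1)) := by
    rw [← Real.rpow_add hE, show 1 / (p-1) + 1/(p-1) = 2/(p-1) by ring]
  have hE21 : (1 - d ^ 2) ^ (2 / (p - 1) + 1)
      = (1 - d ^ 2) ^ (1 / (p - 1)) * (1 - d ^ 2) ^ (1 / (p - 1)) * (1 - d ^ 2) := by
    rw [Real.rpow_add_one hE.ne', hE2]
  have hU21 : (1 - y ^ 2) ^ (2 / (p - 1) + 1)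
      = (1 - y ^ 2) ^ (2 / (p - 1)) * (1 - y ^ 2) := Real.rpow_add_one hU.ne' _
  have hKp1 : (kappaD p d y) ^ (p + 1)
      = (kappa0 p ^ 2 * (2 * (p + 1) / (p - 1) ^ 2)) *
          ((1 - d ^ 2) ^ (1 / (p - 1)) * (1 - d ^ 2) ^ (1 / (p - 1)) * (1 - d ^ 2)) *
          ((1 + d * y) ^ (2 / (p - 1)) * (1 + d * y) ^ (2 / (p - 1)) * (1 + d * y) ^ 2)⁻¹ := by
    rw [kappaD, Real.mul_rpow (by positivity) (by positivity),
      Real.mul_rpow hk.le he1.le, kappa0_rpow_succ hp,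
      ← Real.rpow_mul hE.le, ← Real.rpow_mul hV.le,
      show (1 / (p - 1)) * (p + 1) = 2 / (p-1) + 1 by field_simp; ring,
      show (-(2 / (p - 1))) * (p + 1) = -(4 / (p - 1)) - 2 by field_simp; ring,
      hE21, hV42]
  rw [hKp1]
  simp only [rho, kdDeriv, kappaD, Hder]
  rw [hVn, hVm, hV41, hV42, hE2, hE21, hU21]
  field_simp
  ring

end EnergyStationary

open EnergyStationary in
set_option maxHeartbeats 1000000 in
/-- Energy of the stationary solutions. -/
theorem energy_of_stationary_solutions (p : ℝ) (hp : 1 < p)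
    (d θ : ℝ) (hd : d ∈ Ioo (-1 : ℝ) 1) :
    energy p (fun y => Complex.exp (Complex.I * (θ : ℂ)) * ((kappaD p d y : ℝ) : ℂ))
        (fun _ => (0 : ℂ))
      = energy p (fun _ => ((kappa0 p : ℝ) : ℂ)) (fun _ => (0 : ℂ)) ∧
    energy p (fun _ => ((kappa0 p : ℝ) : ℂ)) (fun _ => (0 : ℂ))
      = ∫ y in Ioo (-1 : ℝ) 1,
          (((p + 1) / (p - 1) ^ 2) * kappa0 p ^ 2 - (1 / (p + 1)) * kappa0 p ^ (p + 1)) *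
            rho p y ∧
    0 < energy p (fun _ => ((kappa0 p : ℝ) : ℂ)) (fun _ => (0 : ℂ)) := by
  have hq : (0:ℝ) < p - 1 := by linarith
  have hq1 : (0:ℝ) < p + 1 := by linarith
  have hk := kappa0_pos hp
  -- Step A: energy of the constant κ₀
  have hA : energy p (fun _ => ((kappa0 p : ℝ) : ℂ)) (fun _ => (0 : ℂ))
      = ∫ y in Ioo (-1 : ℝ) 1,
          (((p + 1) / (p - 1) ^ 2) * kappa0 p ^ 2 - (1 / (p + 1)) * kappa0 p ^ (p + 1)) *
            rho p y := by
    unfold energy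
    apply MeasureTheory.setIntegral_congr_fun measurableSet_Ioo
    intro y _
    simp only [deriv_const', norm_zero, Complex.norm_real, Real.norm_eq_abs, abs_of_pos hk]
    ring
  -- pointwise value of the constant-energy integrand
  have hval : ((p + 1) / (p - 1) ^ 2) * kappa0 p ^ 2 - (1 / (p + 1)) * kappa0 p ^ (p + 1)
      = kappa0 p ^ 2 / (p - 1) := by
    rw [kappa0_rpow_succ hp]
    field_simp
    ring
  have hB : (∫ y in Ioo (-1 : ℝ) 1,
        (((p + 1) / (p - 1) ^ 2) * kappa0 p ^ 2 - (1 / (p + 1)) * kappa0 p ^ (p + 1)) * rho p y)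
      = (kappa0 p ^ 2 / (p - 1)) * ∫ y in Ioo (-1 : ℝ) 1, rho p y := by
    rw [hval, MeasureTheory.integral_const_mul]
  have hpos : 0 < energy p (fun _ => ((kappa0 p : ℝ) : ℂ)) (fun _ => (0 : ℂ)) := by
    rw [hA, hB]
    exact mul_pos (by positivity) (integral_rho_pos hp)
  refine ⟨?_, hA, hpos⟩
  -- Step C: the d-dependent energy
  rw [hA, hB]
  unfold energy
  have heqon : EqOn
      (fun y => ((1 / 2) * ‖(fun _ => (0:ℂ)) y‖ ^ 2 +
          (1 / 2) * ‖deriv (fun y => Complex.exp (Complex.I * (θ : ℂ)) *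
            ((kappaD p d y : ℝ) : ℂ)) y‖ ^ 2 * (1 - y ^ 2) +
          ((p + 1) / (p - 1) ^ 2) * ‖Complex.exp (Complex.I * (θ : ℂ)) *
            ((kappaD p d y : ℝ) : ℂ)‖ ^ 2 -
          (1 / (p + 1)) * ‖Complex.exp (Complex.I * (θ : ℂ)) *
            ((kappaD p d y : ℝ) : ℂ)‖ ^ (p + 1)) * rho p y)
      (fun y => (kappa0 p ^ 2 / (p-1)) *
          ((1-d^2)^(2/(p-1)+1) * (1-y^2)^(2/(p-1)) * (1+d*y)^(-(4/(p-1))-2))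
        + (-(d * kappa0 p ^ 2 / (p-1))) * Hder p d y) (Ioo (-1:ℝ) 1) := by
    intro y hy
    have hV : (0:ℝ) < 1 + d * y := V_pos' hd (Ioo_subset_Icc_self hy)
    have hKpos : 0 < kappaD p d y := by
      have he1 : (0:ℝ) < (1 - d ^ 2) ^ (1 / (p - 1)) := by
        apply Real.rpow_pos_of_pos
        obtain ⟨h1, h2⟩ := hd; nlinarith
      exact mul_pos (mul_pos hk he1) (Real.rpow_pos_of_pos hV _)
    have habs1 : ‖Complex.exp (Complex.I * (θ : ℂ))‖ = 1 := by
      rw [Complex.norm_exp]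
      simp
    have hderiv : deriv (fun y => Complex.exp (Complex.I * (θ : ℂ)) *
        ((kappaD p d y : ℝ) : ℂ)) y
        = Complex.exp (Complex.I * (θ : ℂ)) * ((kdDeriv p d y : ℝ) : ℂ) := by
      exact (((hasDerivAt_kappaD hV).ofReal_comp).const_mul
        (Complex.exp (Complex.I * (θ : ℂ)))).deriv
    simp only [hderiv, norm_mul, habs1, one_mul, Complex.norm_real, Real.norm_eq_abs, norm_zero]
    rw [abs_of_pos hKpos]
    have hsq : |kdDeriv p d y| ^ 2 = kdDeriv p d y ^ 2 := sq_abs _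
    rw [hsq]
    have := key_identity hp hd hy
    linear_combination this
  rw [MeasureTheory.setIntegral_congr_fun measurableSet_Ioo heqon]
  -- integrability of the two pieces
  have hT1cont : ContinuousOn (fun y : ℝ =>
      (kappa0 p ^ 2 / (p-1)) *
        ((1-d^2)^(2/(p-1)+1) * (1-y^2)^(2/(p-1)) * (1+d*y)^(-(4/(p-1))-2))) (Icc (-1:ℝ) 1) := by
    intro x hx
    have hV := V_pos' hd hx
    apply ContinuousAt.continuousWithinAt
    have c1 : ContinuousAt (fun y : ℝ => (1 - y ^ 2) ^ (2 / (p - 1))) x :=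
      ContinuousAt.rpow_const (by fun_prop) (Or.inr (by positivity))
    have c2 : ContinuousAt (fun y : ℝ => (1 + d * y) ^ (-(4 / (p - 1)) - 2)) x :=
      ContinuousAt.rpow_const (by fun_prop) (Or.inl hV.ne')
    fun_prop
  have hT1int : IntegrableOn (fun y : ℝ =>
      (kappa0 p ^ 2 / (p-1)) *
        ((1-d^2)^(2/(p-1)+1) * (1-y^2)^(2/(p-1)) * (1+d*y)^(-(4/(p-1))-2))) (Ioo (-1:ℝ) 1) :=
    (hT1cont.integrableOn_Icc).mono_set Ioo_subset_Icc_self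
  have hHint : IntegrableOn (fun y : ℝ => (-(d * kappa0 p ^ 2 / (p-1))) * Hder p d y)
      (Ioo (-1:ℝ) 1) :=
    ((continuousOn_const.mul (Hder_continuousOn hp hd)).integrableOn_Icc).mono_set
      Ioo_subset_Icc_self
  rw [MeasureTheory.integral_add hT1int hHint, MeasureTheory.integral_const_mul,
    MeasureTheory.integral_const_mul, cov hp hd, integral_Hder_eq_zero hp hd, mul_zero, add_zero]
  unfold rho
  rfl
end
end

section
/- Existence of a non-characteristic point with prescribed location (geometric lemma): Let T : ℝ → ℝ be 1-Lipschitz and suppose there exist T_* ∈ ℝ, x_* ∈ ℝ and δ_* ∈ (0,1) such that T(x) ≥ T_* − δ_* |x − x_*| for all x ∈ ℝ. Then for every x₁ ∈ ℝ and every δ₁ ∈ (δ_*, 1), there exists x₀ ∈ ℝ such that: (i) T(x₀) ≤ T(x₁) − δ₁ |x₀ − x₁|, and (ii) for all ξ ∈ ℝ, T(ξ) ≥ T(x₀) − δ₁ |ξ − x₀|. In particular, x₀ is a non-characteristic point of the graph of T (with slope parameter at most δ₁ < 1). -/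
open Real MeasureTheory Set

noncomputable section

/-! Minimise `x ↦ T x + δ₁ * dist x x₁`. The lower cone of slope `δ_* < δ₁` makes this function
tend to `+∞` at infinity, so it has a global minimiser `x₀`. Comparing with the value at `x₁`
gives (i), and minimality together with the triangle inequality for `dist · x₁` gives (ii). -/

section ConeMinimizer

open Filter

variable {X : Type*} [PseudoMetricSpace X]

theorem tendsto_add_mul_dist_cocompact [ProperSpace X] {T : X → ℝ} {a δ₀ δ : ℝ} {c : X}
    (hδ₀ : 0 ≤ δ₀) (hδ : δ₀ < δ) (hlow : ∀ x, a - δ₀ * dist x c ≤ T x) (x₁ : X) :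
    Tendsto (fun x => T x + δ * dist x x₁) (cocompact X) atTop := by
  have hlin : Tendsto (fun x => a - δ₀ * dist x₁ c + (δ - δ₀) * dist x x₁) (cocompact X) atTop :=
    tendsto_atTop_add_const_left _ _
      ((tendsto_dist_right_cocompact_atTop x₁).const_mul_atTop (sub_pos.2 hδ))
  refine tendsto_atTop_mono (fun x => ?_) hlin
  have := mul_le_mul_of_nonneg_left (dist_triangle x x₁ c) hδ₀
  linarith [hlow x]

theorem le_add_mul_dist_of_forall_add_mul_dist_le {T : X → ℝ} {δ : ℝ} (hδ : 0 ≤ δ) {x₀ x₁ : X}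
    (hmin : ∀ x, T x₀ + δ * dist x₀ x₁ ≤ T x + δ * dist x x₁) (ξ : X) :
    T x₀ ≤ T ξ + δ * dist ξ x₀ := by
  have := mul_le_mul_of_nonneg_left (dist_triangle ξ x₀ x₁) hδ
  linarith [hmin ξ]

theorem exists_cone_vertex_below [ProperSpace X] {T : X → ℝ} (hT : Continuous T) {a δ₀ : ℝ}
    {c : X} (hδ₀ : 0 ≤ δ₀) (hlow : ∀ x, a - δ₀ * dist x c ≤ T x) (x₁ : X) {δ : ℝ}
    (hδ : δ₀ < δ) :
    ∃ y, T y ≤ T x₁ - δ * dist y x₁ ∧ ∀ ξ, T y - δ * dist ξ y ≤ T ξ := by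
  have : Nonempty X := ⟨x₁⟩
  obtain ⟨y, hy⟩ : ∃ y, ∀ x, T y + δ * dist y x₁ ≤ T x + δ * dist x x₁ :=
    (hT.add (continuous_const.mul (continuous_id.dist continuous_const))).exists_forall_le
      (tendsto_add_mul_dist_cocompact hδ₀ hδ hlow x₁)
  refine ⟨y, ?_, fun ξ => ?_⟩
  · simpa [le_sub_iff_add_le] using hy x₁
  · linarith [le_add_mul_dist_of_forall_add_mul_dist_le (hδ₀.trans hδ.le) hy ξ]

end ConeMinimizer

/-- Existence of a non-characteristic point with prescribed location. -/
theorem exists_nonchar_point_with_location (T : ℝ → ℝ) (hT : LipschitzWith 1 T)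
    (Tstar xstar δstar : ℝ) (hδ : δstar ∈ Ioo (0 : ℝ) 1)
    (hlow : ∀ x : ℝ, Tstar - δstar * |x - xstar| ≤ T x) :
    ∀ x1 δ1 : ℝ, δstar < δ1 → δ1 < 1 →
      ∃ x0 : ℝ, T x0 ≤ T x1 - δ1 * |x0 - x1| ∧ ∀ ξ : ℝ, T x0 - δ1 * |ξ - x0| ≤ T ξ := by
  intro x1 δ1 hδ1 _
  simp only [← Real.dist_eq] at hlow ⊢
  exact exists_cone_vertex_below hT.continuous hδ.1.le hlow x1 hδ1
end
end
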